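/- (Null-vector condition for the Ricci flow reaction term.) Let R be an algebraic curvature tensor on ℝⁿ with nonnegative complex sectional curvature, and suppose Z, W ∈ ℂⁿ satisfy R(Z, W, Z̄, W̄) = 0. Then Q(R)(Z, W, Z̄, W̄) is a real number and Q(R)(Z, W, Z̄, W̄) ≥ 0. -/

import Mathlib

open Complex

noncomputable section

/-- An algebraic curvature tensor on `ℝⁿ`, given by its coefficients on the
standard basis, satisfying the usual symmetries and the first Bianchi identity.
(A multilinear map `(ℝⁿ)⁴ → ℝ` with these symmetries is equivalent to such data.) -/
structure AlgCurv (n : ℕ) where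
  R : Fin n → Fin n → Fin n → Fin n → ℝ
  skew₁ : ∀ i j k l, R i j k l = - R j i k l
  skew₂ : ∀ i j k l, R i j k l = - R i j l k
  pair_symm : ∀ i j k l, R i j k l = R k l i j
  bianchi : ∀ i j k l, R i j k l + R j k i l + R k i j l = 0

namespace AlgCurv

variable {n : ℕ}

/-- The multilinear map `(ℝⁿ)⁴ → ℝ` determined by the coefficients. -/
def evalR (T : AlgCurv n) (X Y U V : Fin n → ℝ) : ℝ :=
  ∑ i : Fin n, ∑ j : Fin n, ∑ k : Fin n, ∑ l : Fin n,
    T.R i j k l * X i * Y j * U k * V l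

/-- The `ℂ`-multilinear extension to `ℂⁿ = Fin n → ℂ`. -/
def evalC (T : AlgCurv n) (Z W U V : Fin n → ℂ) : ℂ :=
  ∑ i : Fin n, ∑ j : Fin n, ∑ k : Fin n, ∑ l : Fin n,
    (T.R i j k l : ℂ) * Z i * W j * U k * V l

end AlgCurv

/-- The standard (real) inner product on `ℝⁿ`. -/
def rInner {n : ℕ} (X Y : Fin n → ℝ) : ℝ := ∑ i : Fin n, X i * Y i

/-- The `ℂ`-bilinear (not hermitian) extension `⟨Z,W⟩ = Σᵢ Zᵢ Wᵢ`. -/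
def cInner {n : ℕ} (Z W : Fin n → ℂ) : ℂ := ∑ i : Fin n, Z i * W i

/-- Entrywise complex conjugation. -/
def conjV {n : ℕ} (Z : Fin n → ℂ) : Fin n → ℂ := fun i => starRingEnd ℂ (Z i)

/-- `R` has nonnegative complex sectional curvature: `R(Z,W,Z̄,W̄)` is a
nonnegative real number for all `Z, W ∈ ℂⁿ`. -/
def nonnegCSC {n : ℕ} (T : AlgCurv n) : Prop :=
  ∀ Z W : Fin n → ℂ, ∃ r : ℝ, 0 ≤ r ∧
    T.evalC Z W (conjV Z) (conjV W) = (r : ℂ)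

/-- The complexified vector `X + iY`. -/
def cx {n : ℕ} (X Y : Fin n → ℝ) : Fin n → ℂ :=
  fun i => (X i : ℂ) + Complex.I * (Y i : ℂ)

/-- The `ℂ`-multilinear extension of the curvature tensor of constant curvature one,
`I(X,Y,Z,W) = ⟨X,Z⟩⟨Y,W⟩ − ⟨X,W⟩⟨Y,Z⟩`. -/
def IC {n : ℕ} (Z W U V : Fin n → ℂ) : ℂ :=
  cInner Z U * cInner W V - cInner Z V * cInner W U

/-- The `p`-th standard basis vector of `ℂⁿ`. -/
def basisC {n : ℕ} (p : Fin n) : Fin n → ℂ := fun i => if i = p then 1 else 0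

/-- Hamilton's reaction term `Q(R)`, evaluated on `(Z, W, U, V)`
(with `U = Z̄`, `V = W̄` in applications). -/
def Qr {n : ℕ} (T : AlgCurv n) (Z W U V : Fin n → ℂ) : ℂ :=
  (∑ p : Fin n, ∑ q : Fin n,
      T.evalC Z W (basisC p) (basisC q) * T.evalC U V (basisC p) (basisC q))
  + 2 * (∑ p : Fin n, ∑ q : Fin n,
      T.evalC Z (basisC p) U (basisC q) * T.evalC W (basisC p) V (basisC q))
  - 2 * (∑ p : Fin n, ∑ q : Fin n,
      T.evalC Z (basisC p) V (basisC q) * T.evalC W (basisC p) U (basisC q))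

/-- The `ℂ`-linear extension of a real matrix (endomorphism of `ℝⁿ`) acting on `ℂⁿ`. -/
def mulVecC {n : ℕ} (A : Matrix (Fin n) (Fin n) ℝ) (Z : Fin n → ℂ) : Fin n → ℂ :=
  fun i => ∑ j : Fin n, (A i j : ℂ) * Z j

/-- `(A ∧ id)(Z, W, Z̄, W̄)`. -/
def wedgeId {n : ℕ} (A : Matrix (Fin n) (Fin n) ℝ) (Z W : Fin n → ℂ) : ℂ :=
  (1/2 : ℂ) * (cInner (mulVecC A Z) (conjV Z) * cInner W (conjV W)
             + cInner (mulVecC A W) (conjV W) * cInner Z (conjV Z))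
  - (1/2 : ℂ) * (cInner (mulVecC A W) (conjV Z) * cInner Z (conjV W)
               + cInner (mulVecC A Z) (conjV W) * cInner W (conjV Z))

/-- The Ricci curvature of `R`, as a matrix:  `⟨Ric(R)(X), Y⟩ = Σ_p R(X, e_p, Y, e_p)`. -/
def ricM {n : ℕ} (T : AlgCurv n) : Matrix (Fin n) (Fin n) ℝ :=
  Matrix.of fun i j => ∑ p : Fin n, T.R i p j p

/-!
`F(X, Y) = R(X, Y, X̄, Ȳ)` is a nonnegative quartic function on `ℂⁿ × ℂⁿ` vanishing at `(Z, W)`,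
so its second variation there is nonnegative. Replacing a direction `(ξ, η)` by `(iξ, iη)` flips
the sign of the `ℂ`-bilinear part of the second variation, hence its Hermitian part
`H(ξ, η) = R(ξ, W, ξ̄, W̄) + R(ξ, W, Z̄, η̄) + R(Z, η, ξ̄, W̄) + R(Z, η, Z̄, η̄)` is positive
semidefinite. In the standard basis
`Q(R)(Z, W, Z̄, W̄) = Σ |R(Z, W, e_p, e_q)|² + 2 Σ_{p,q} (A_pq D_pq - B_pq C_pq)`,
where `[[A, B], [C, D]]` is the matrix of `H`. Writing that matrix as `Σ_k v_k v_kᴴ`, the last sum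
becomes `½ Σ_{k,l} |x_kl - x_lk|²` with `x_kl = Σ_p v_k(e_p, 0) v_l(0, e_p)`.
-/

open Matrix ComplexConjugate
open scoped ComplexOrder

lemma nonneg_of_forall_pos_cubic_nonneg {a b c d : ℝ}
    (h : ∀ s > 0, 0 ≤ a + b * s + c * s ^ 2 + d * s ^ 3) : 0 ≤ a := by
  have hcont : Continuous fun s : ℝ => a + b * s + c * s ^ 2 + d * s ^ 3 := by fun_prop
  simpa using ge_of_tendsto ((hcont.tendsto 0).mono_left nhdsWithin_le_nhds)
    (eventually_nhdsWithin_of_forall (s := Set.Ioi 0) h)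

lemma linear_coeff_nonneg_of_quartic_nonneg {a b c d : ℝ}
    (h : ∀ s, 0 ≤ a * s + b * s ^ 2 + c * s ^ 3 + d * s ^ 4) : 0 ≤ a :=
  nonneg_of_forall_pos_cubic_nonneg (b := b) (c := c) (d := d) fun s hs =>
    nonneg_of_mul_nonneg_right (by linear_combination h s) hs

lemma quadratic_coeff_nonneg_of_quartic_nonneg {a b c d : ℝ}
    (h : ∀ s, 0 ≤ a * s + b * s ^ 2 + c * s ^ 3 + d * s ^ 4) : 0 ≤ b := by
  have ha : a = 0 := le_antisymm
    (neg_nonneg.mp (linear_coeff_nonneg_of_quartic_nonneg (b := b) (c := -c) (d := d)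
      fun s => by linear_combination h (-s)))
    (linear_coeff_nonneg_of_quartic_nonneg h)
  subst ha
  exact nonneg_of_forall_pos_cubic_nonneg (b := c) (c := d) (d := 0) fun s hs =>
    nonneg_of_mul_nonneg_right (by linear_combination h s) (pow_pos hs 2)

lemma sum_comm_pairs {α β γ δ M : Type*} [Fintype α] [Fintype β] [Fintype γ] [Fintype δ]
    [AddCommMonoid M] (f : α → β → γ → δ → M) :
    ∑ a, ∑ b, ∑ c, ∑ d, f a b c d = ∑ c, ∑ d, ∑ a, ∑ b, f a b c d := by
  simp only [← Fintype.sum_prod_type']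
  exact Fintype.sum_equiv ((Equiv.prodAssoc _ _ _).symm.trans
    ((Equiv.prodComm _ _).trans (Equiv.prodAssoc _ _ _))) _ _ fun _ => rfl

section BlockMatrix

variable {ι κ 𝕜 : Type*} [Fintype ι] [Fintype κ] [RCLike 𝕜]

lemma sum_sum_mul_sum_mul_sum (f f' g g' : κ → ι → 𝕜) :
    ∑ p, ∑ q, (∑ i, f i p * g i q) * (∑ j, f' j p * g' j q)
      = ∑ i, ∑ j, (∑ p, f i p * f' j p) * (∑ q, g i q * g' j q) := by
  simp only [Finset.sum_mul_sum]
  rw [sum_comm_pairs]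
  exact Fintype.sum_congr _ _ fun i => Fintype.sum_congr _ _ fun j =>
    Fintype.sum_congr _ _ fun p => Fintype.sum_congr _ _ fun q => by ring

lemma sum_mul_conj_sub_swap (x : κ → κ → 𝕜) :
    ∑ i, ∑ j, x i j * conj (x i j - x j i) = ((2⁻¹ * ∑ i, ∑ j, ‖x i j - x j i‖ ^ 2 : ℝ) : 𝕜) := by
  have hswap : ∑ i, ∑ j, x i j * conj (x i j - x j i)
      = ∑ i, ∑ j, -(x j i * conj (x i j - x j i)) := by
    rw [Finset.sum_comm]
    refine Fintype.sum_congr _ _ fun i => Fintype.sum_congr _ _ fun j => ?_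
    rw [map_sub, map_sub]; ring
  have htwice : 2 * ∑ i, ∑ j, x i j * conj (x i j - x j i)
      = ∑ i, ∑ j, (‖x i j - x j i‖ : 𝕜) ^ 2 := by
    rw [two_mul]
    nth_rw 2 [hswap]
    simp only [← Finset.sum_add_distrib, ← RCLike.mul_conj]
    exact Fintype.sum_congr _ _ fun i => Fintype.sum_congr _ _ fun j => by ring
  push_cast
  rw [← htwice]
  ring

lemma star_dotProduct_mulVec_eq_sum (x y : ι → 𝕜) (A : Matrix ι ι 𝕜) :
    star x ⬝ᵥ (A *ᵥ y) = ∑ q, y q * ∑ p, conj (x p) * A p q := by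
  rw [dotProduct_mulVec, dotProduct_comm]
  rfl

theorem Matrix.PosSemidef.sum_fromBlocks_mul_sub_mul_nonneg {A B C D : Matrix ι ι 𝕜}
    (h : (fromBlocks A B C D).PosSemidef) :
    0 ≤ ∑ p, ∑ q, (A p q * D p q - B p q * C p q) := by
  obtain ⟨m, v, hv⟩ := posSemidef_iff_eq_sum_vecMulVec.mp h
  have entry : ∀ a b, fromBlocks A B C D a b = ∑ i, v i a * conj (v i b) := fun a b => by
    rw [hv, Matrix.sum_apply]
    rfl
  set x : Fin m → Fin m → 𝕜 := fun i j => ∑ p, v i (.inl p) * v j (.inr p)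
  have hAD : ∑ p, ∑ q, A p q * D p q = ∑ i, ∑ j, x i j * conj (x i j) := by
    simp only [← fromBlocks_apply₁₁ A B C D, ← fromBlocks_apply₂₂ A B C D, entry]
    rw [sum_sum_mul_sum_mul_sum]
    simp only [x, map_sum, map_mul]
  have hBC : ∑ p, ∑ q, B p q * C p q = ∑ i, ∑ j, x i j * conj (x j i) := by
    simp only [← fromBlocks_apply₁₂ A B C D, ← fromBlocks_apply₂₁ A B C D, entry]
    rw [sum_sum_mul_sum_mul_sum]
    simp only [x, map_sum, map_mul, mul_comm (conj (v _ (.inl _)))]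
  have hdiff : ∑ p, ∑ q, (A p q * D p q - B p q * C p q)
      = ∑ i, ∑ j, x i j * conj (x i j - x j i) := by
    simp only [Finset.sum_sub_distrib, hAD, hBC, map_sub, mul_sub]
  rw [hdiff, sum_mul_conj_sub_swap, RCLike.ofReal_nonneg]
  positivity

end BlockMatrix

lemma conjV_conjV {n : ℕ} (X : Fin n → ℂ) : conjV (conjV X) = X := by
  funext i; simp [conjV]

lemma conjV_basisC {n : ℕ} (p : Fin n) : conjV (basisC p) = basisC p := by
  funext i; simp [conjV, basisC, apply_ite]

lemma conjV_smul {n : ℕ} (c : ℂ) (X : Fin n → ℂ) : conjV (c • X) = conj c • conjV X := by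
  funext i; simp [conjV]

lemma conjV_add {n : ℕ} (X Y : Fin n → ℂ) : conjV (X + Y) = conjV X + conjV Y := by
  funext i; simp [conjV]

namespace AlgCurv

variable {n : ℕ} (T : AlgCurv n)

lemma evalC_antisymm₁₂ (X Y U V : Fin n → ℂ) : T.evalC Y X U V = -T.evalC X Y U V := by
  simp only [evalC, ← Finset.sum_neg_distrib]
  rw [Finset.sum_comm]
  refine Fintype.sum_congr _ _ fun i => Fintype.sum_congr _ _ fun j =>
    Fintype.sum_congr _ _ fun k => Fintype.sum_congr _ _ fun l => ?_
  rw [T.skew₁ j i k l]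
  push_cast
  ring

lemma evalC_pair_comm (X Y U V : Fin n → ℂ) : T.evalC U V X Y = T.evalC X Y U V := by
  simp only [evalC]
  rw [sum_comm_pairs]
  refine Fintype.sum_congr _ _ fun i => Fintype.sum_congr _ _ fun j =>
    Fintype.sum_congr _ _ fun k => Fintype.sum_congr _ _ fun l => ?_
  rw [T.pair_symm k l i j]
  ring

lemma evalC_antisymm₃₄ (X Y U V : Fin n → ℂ) : T.evalC X Y V U = -T.evalC X Y U V := by
  rw [← evalC_pair_comm, evalC_antisymm₁₂, evalC_pair_comm]

lemma conj_evalC (X Y U V : Fin n → ℂ) :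
    conj (T.evalC X Y U V) = T.evalC (conjV X) (conjV Y) (conjV U) (conjV V) := by
  simp [evalC, conjV]

lemma evalC_smul₁ (c : ℂ) (X Y U V : Fin n → ℂ) :
    T.evalC (c • X) Y U V = c * T.evalC X Y U V := by
  simp only [evalC, Finset.mul_sum, Pi.smul_apply, smul_eq_mul]
  exact Fintype.sum_congr _ _ fun i => Fintype.sum_congr _ _ fun j =>
    Fintype.sum_congr _ _ fun k => Fintype.sum_congr _ _ fun l => by ring

lemma evalC_smul₂ (c : ℂ) (X Y U V : Fin n → ℂ) :
    T.evalC X (c • Y) U V = c * T.evalC X Y U V := by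
  rw [T.evalC_antisymm₁₂ (c • Y), evalC_smul₁, T.evalC_antisymm₁₂ Y X, mul_neg]

lemma evalC_smul₃ (c : ℂ) (X Y U V : Fin n → ℂ) :
    T.evalC X Y (c • U) V = c * T.evalC X Y U V := by
  rw [← evalC_pair_comm, evalC_smul₁, evalC_pair_comm]

lemma evalC_smul₄ (c : ℂ) (X Y U V : Fin n → ℂ) :
    T.evalC X Y U (c • V) = c * T.evalC X Y U V := by
  rw [← evalC_pair_comm, evalC_smul₂, evalC_pair_comm]

lemma evalC_eq_sum₁ (X Y U V : Fin n → ℂ) :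
    T.evalC X Y U V = ∑ p, X p * T.evalC (basisC p) Y U V := by
  simp only [evalC, basisC, mul_ite, mul_one, mul_zero, ite_mul, zero_mul, Finset.sum_ite_irrel,
    Finset.sum_const_zero, Finset.sum_ite_eq', Finset.mem_univ, if_true, Finset.mul_sum]
  exact Fintype.sum_congr _ _ fun i => Fintype.sum_congr _ _ fun j =>
    Fintype.sum_congr _ _ fun k => Fintype.sum_congr _ _ fun l => by ring

lemma evalC_eq_sum₂ (X Y U V : Fin n → ℂ) :
    T.evalC X Y U V = ∑ p, Y p * T.evalC X (basisC p) U V := by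
  rw [← neg_neg (T.evalC X Y U V), ← evalC_antisymm₁₂, evalC_eq_sum₁, ← Finset.sum_neg_distrib]
  simp only [evalC_antisymm₁₂ T (basisC _), mul_neg]

lemma evalC_eq_sum₃ (X Y U V : Fin n → ℂ) :
    T.evalC X Y U V = ∑ p, U p * T.evalC X Y (basisC p) V := by
  simp only [← T.evalC_pair_comm X Y, ← evalC_eq_sum₁]

lemma evalC_eq_sum₄ (X Y U V : Fin n → ℂ) :
    T.evalC X Y U V = ∑ p, V p * T.evalC X Y U (basisC p) := by
  simp only [← T.evalC_pair_comm X Y, ← evalC_eq_sum₂]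

lemma evalC_add_smul (X X' Y Y' U U' V V' : Fin n → ℂ) (s : ℂ) :
    T.evalC (X + s • X') (Y + s • Y') (U + s • U') (V + s • V') =
      T.evalC X Y U V
      + s * (T.evalC X' Y U V + T.evalC X Y' U V + T.evalC X Y U' V + T.evalC X Y U V')
      + s ^ 2 * (T.evalC X' Y' U V + T.evalC X' Y U' V + T.evalC X' Y U V'
          + T.evalC X Y' U' V + T.evalC X Y' U V' + T.evalC X Y U' V')
      + s ^ 3 * (T.evalC X' Y' U' V + T.evalC X' Y' U V' + T.evalC X' Y U' V'
          + T.evalC X Y' U' V')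
      + s ^ 4 * T.evalC X' Y' U' V' := by
  simp only [evalC, Finset.mul_sum, ← Finset.sum_add_distrib, Pi.add_apply, Pi.smul_apply,
    smul_eq_mul]
  exact Fintype.sum_congr _ _ fun i => Fintype.sum_congr _ _ fun j =>
    Fintype.sum_congr _ _ fun k => Fintype.sum_congr _ _ fun l => by ring

def secondVariation (Z W ξ η : Fin n → ℂ) : ℂ :=
  T.evalC ξ η (conjV Z) (conjV W) + T.evalC ξ W (conjV ξ) (conjV W)
    + T.evalC ξ W (conjV Z) (conjV η) + T.evalC Z η (conjV ξ) (conjV W)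
    + T.evalC Z η (conjV Z) (conjV η) + T.evalC Z W (conjV ξ) (conjV η)

def hermitianSecondVariation (Z W ξ η : Fin n → ℂ) : ℂ :=
  T.evalC ξ W (conjV ξ) (conjV W) + T.evalC ξ W (conjV Z) (conjV η)
    + T.evalC Z η (conjV ξ) (conjV W) + T.evalC Z η (conjV Z) (conjV η)

variable {T} in
lemma re_secondVariation_nonneg (hT : nonnegCSC T) {Z W : Fin n → ℂ}
    (h0 : T.evalC Z W (conjV Z) (conjV W) = 0) (ξ η : Fin n → ℂ) :
    0 ≤ (T.secondVariation Z W ξ η).re := by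
  refine quadratic_coeff_nonneg_of_quartic_nonneg
    (a := (T.evalC ξ W (conjV Z) (conjV W) + T.evalC Z η (conjV Z) (conjV W)
      + T.evalC Z W (conjV ξ) (conjV W) + T.evalC Z W (conjV Z) (conjV η)).re)
    (c := (T.evalC ξ η (conjV ξ) (conjV W) + T.evalC ξ η (conjV Z) (conjV η)
      + T.evalC ξ W (conjV ξ) (conjV η) + T.evalC Z η (conjV ξ) (conjV η)).re)
    (d := (T.evalC ξ η (conjV ξ) (conjV η)).re) fun s => ?_
  obtain ⟨r, hr, hrs⟩ := hT (Z + (s : ℂ) • ξ) (W + (s : ℂ) • η)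
  rw [conjV_add, conjV_add, conjV_smul, conjV_smul, Complex.conj_ofReal, evalC_add_smul, h0] at hrs
  have hre := congrArg Complex.re hrs
  simp only [Complex.add_re, Complex.zero_re, ← Complex.ofReal_pow, Complex.re_ofReal_mul,
    Complex.ofReal_re] at hre
  simp only [secondVariation, Complex.add_re]
  linarith

lemma secondVariation_add_secondVariation_I_smul (Z W ξ η : Fin n → ℂ) :
    T.secondVariation Z W ξ η + T.secondVariation Z W (Complex.I • ξ) (Complex.I • η)
      = 2 * T.hermitianSecondVariation Z W ξ η := by
  simp only [secondVariation, hermitianSecondVariation, conjV_smul, Complex.conj_I,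
    evalC_smul₁, evalC_smul₂, evalC_smul₃, evalC_smul₄]
  linear_combination (T.evalC ξ η (conjV Z) (conjV W) - T.evalC ξ W (conjV ξ) (conjV W)
    - T.evalC ξ W (conjV Z) (conjV η) - T.evalC Z η (conjV ξ) (conjV W)
    - T.evalC Z η (conjV Z) (conjV η) + T.evalC Z W (conjV ξ) (conjV η)) * Complex.I_sq

variable {T} in
lemma re_hermitianSecondVariation_nonneg (hT : nonnegCSC T) {Z W : Fin n → ℂ}
    (h0 : T.evalC Z W (conjV Z) (conjV W) = 0) (ξ η : Fin n → ℂ) :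
    0 ≤ (T.hermitianSecondVariation Z W ξ η).re := by
  have h := congrArg Complex.re (T.secondVariation_add_secondVariation_I_smul Z W ξ η)
  simp only [Complex.add_re, Complex.mul_re, Complex.re_ofNat, Complex.im_ofNat, zero_mul,
    sub_zero] at h
  linarith [re_secondVariation_nonneg hT h0 ξ η,
    re_secondVariation_nonneg hT h0 (Complex.I • ξ) (Complex.I • η)]

def secondVariationMatrix (Z W : Fin n → ℂ) : Matrix (Fin n ⊕ Fin n) (Fin n ⊕ Fin n) ℂ :=
  fromBlocks (of fun p q => T.evalC (basisC q) W (basisC p) (conjV W))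
    (of fun p q => T.evalC Z (basisC q) (basisC p) (conjV W))
    (of fun p q => T.evalC (basisC q) W (conjV Z) (basisC p))
    (of fun p q => T.evalC Z (basisC q) (conjV Z) (basisC p))

lemma star_sumElim_dotProduct_secondVariationMatrix_mulVec (Z W ξ η : Fin n → ℂ) :
    star (Sum.elim ξ η) ⬝ᵥ (T.secondVariationMatrix Z W *ᵥ Sum.elim ξ η)
      = T.hermitianSecondVariation Z W ξ η := by
  rw [secondVariationMatrix, fromBlocks_mulVec, Sum.elim_comp_inl, Sum.elim_comp_inr,
    Function.star_sumElim, sumElim_dotProduct_sumElim, dotProduct_add, dotProduct_add,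
    star_dotProduct_mulVec_eq_sum, star_dotProduct_mulVec_eq_sum, star_dotProduct_mulVec_eq_sum,
    star_dotProduct_mulVec_eq_sum, hermitianSecondVariation,
    T.evalC_eq_sum₁ ξ W, T.evalC_eq_sum₁ ξ W (conjV Z), T.evalC_eq_sum₂ Z η (conjV ξ),
    T.evalC_eq_sum₂ Z η (conjV Z)]
  simp only [T.evalC_eq_sum₃ (basisC _) W (conjV ξ) (conjV W),
    T.evalC_eq_sum₃ Z (basisC _) (conjV ξ) (conjV W),
    T.evalC_eq_sum₄ (basisC _) W (conjV Z) (conjV η),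
    T.evalC_eq_sum₄ Z (basisC _) (conjV Z) (conjV η), of_apply, conjV]
  ring

lemma secondVariationMatrix_isHermitian (Z W : Fin n → ℂ) :
    (T.secondVariationMatrix Z W).IsHermitian := by
  refine IsHermitian.fromBlocks ?_ ?_ ?_ <;> ext p q <;>
    simp only [conjTranspose_apply, of_apply, Complex.star_def, conj_evalC,
      conjV_basisC, conjV_conjV] <;>
    exact T.evalC_pair_comm ..

variable {T} in
lemma secondVariationMatrix_posSemidef (hT : nonnegCSC T) {Z W : Fin n → ℂ}
    (h0 : T.evalC Z W (conjV Z) (conjV W) = 0) : (T.secondVariationMatrix Z W).PosSemidef := by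
  have hH := T.secondVariationMatrix_isHermitian Z W
  refine .of_dotProduct_mulVec_nonneg hH fun v => Complex.le_def.mpr ⟨?_, ?_⟩
  · rw [← Sum.elim_comp_inl_inr v, star_sumElim_dotProduct_secondVariationMatrix_mulVec]
    exact re_hermitianSecondVariation_nonneg hT h0 _ _
  · exact (hH.im_star_dotProduct_mulVec_self v).symm

lemma Qr_conjV_eq (Z W : Fin n → ℂ) :
    Qr T Z W (conjV Z) (conjV W)
      = ((∑ p, ∑ q, ‖T.evalC Z W (basisC p) (basisC q)‖ ^ 2 : ℝ) : ℂ)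
        + 2 * ∑ p, ∑ q,
          (T.evalC (basisC q) W (basisC p) (conjV W) * T.evalC Z (basisC q) (conjV Z) (basisC p)
            - T.evalC Z (basisC q) (basisC p) (conjV W)
              * T.evalC (basisC q) W (conjV Z) (basisC p)) := by
  have h₁ : ∀ p q : Fin n, T.evalC (conjV Z) (conjV W) (basisC p) (basisC q)
      = conj (T.evalC Z W (basisC p) (basisC q)) := fun p q => by
    rw [conj_evalC, conjV_basisC, conjV_basisC]
  have h₂ : ∀ p q : Fin n,
      T.evalC Z (basisC p) (conjV Z) (basisC q) * T.evalC W (basisC p) (conjV W) (basisC q)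
        = T.evalC (basisC p) W (basisC q) (conjV W) * T.evalC Z (basisC p) (conjV Z) (basisC q) :=
    fun p q => by
      rw [T.evalC_antisymm₁₂ (basisC p) W, T.evalC_antisymm₃₄ (basisC p) W (basisC q), neg_neg,
        mul_comm]
  have h₃ : ∀ p q : Fin n,
      T.evalC Z (basisC p) (conjV W) (basisC q) * T.evalC W (basisC p) (conjV Z) (basisC q)
        = T.evalC Z (basisC p) (basisC q) (conjV W) * T.evalC (basisC p) W (conjV Z) (basisC q) :=
    fun p q => by
      rw [T.evalC_antisymm₃₄ Z _ (basisC q), T.evalC_antisymm₁₂ (basisC p) W, neg_mul_neg]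
  simp only [Qr, h₁, h₂, h₃, Complex.mul_conj', Finset.sum_sub_distrib]
  rw [Finset.sum_comm (f := fun p q => T.evalC (basisC q) W (basisC p) (conjV W) * _),
    Finset.sum_comm (f := fun p q => T.evalC Z (basisC q) (basisC p) (conjV W) * _)]
  push_cast
  ring

end AlgCurv

/-- null-vector condition for the Ricci flow reaction term `Q(R)`. -/
theorem null_vector_Q_nonneg {n : ℕ} (T : AlgCurv n) (hT : nonnegCSC T)
    (Z W : Fin n → ℂ) (h0 : T.evalC Z W (conjV Z) (conjV W) = 0) :
    ∃ r : ℝ, 0 ≤ r ∧ Qr T Z W (conjV Z) (conjV W) = (r : ℂ) := by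
  have hblocks := (AlgCurv.secondVariationMatrix_posSemidef hT h0).sum_fromBlocks_mul_sub_mul_nonneg
  simp only [of_apply] at hblocks
  have hQ : 0 ≤ Qr T Z W (conjV Z) (conjV W) := by
    rw [T.Qr_conjV_eq]
    exact add_nonneg (Complex.zero_le_real.mpr (by positivity)) (mul_nonneg zero_le_two hblocks)
  obtain ⟨r, hr, hrQ⟩ := RCLike.nonneg_iff_exists_ofReal.mp hQ
  exact ⟨r, hr, hrQ.symm⟩
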